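/- Let D[X] be the polynomial ring over an integral domain D and let a ∈ D be a nonzero nonunit. Then a is a valuation element of D if and only if a is a valuation element of D[X]. -/

import Mathlib

/-- `a` is a valuation element of the domain `D`: `a` is a nonzero nonunit and there is a
valuation overring `V` of `D` (inside the fraction field) with `aV ∩ D = aD`. -/
def IsValuationElement (D : Type*) [CommRing D] [IsDomain D] (a : D) : Prop :=
  a ≠ 0 ∧ ¬ IsUnit a ∧
  ∃ V : Subring (FractionRing D),
    Set.range (algebraMap D (FractionRing D)) ⊆ V ∧
    ValuationRing V ∧
    ∀ d : D, (∃ v ∈ V, algebraMap D (FractionRing D) d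
        = algebraMap D (FractionRing D) a * v) ↔ a ∣ d

open Polynomial Finset

/-!
If `V` is a valuation overring of `D` with valuation `v`, the Gauss valuation
`p ↦ maxᵢ v(pᵢ)` of `D[X]` is multiplicative by Gauss's lemma, hence extends to `Frac D[X]`;
its valuation ring is `V(X)`. Since `C a` divides `p` in `V(X)` iff every coefficient has value
at most `v(a)`, the condition `aV ∩ D = aD` passes coefficientwise to `aV(X) ∩ D[X] = aD[X]`.
Conversely, a valuation overring of `D[X]` pulls back along `Frac D → Frac D[X]` to a valuation
overring of `D`, and `C a ∣ C d` iff `a ∣ d`.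
-/

namespace Polynomial

section GaussValuation

variable {R Γ₀ : Type*} [CommRing R] [LinearOrderedCommGroupWithZero Γ₀] (v : Valuation R Γ₀)

def gaussSup (p : R[X]) : Γ₀ := p.support.sup fun i ↦ v (p.coeff i)

variable {v}

theorem gaussSup_le_iff {p : R[X]} {γ : Γ₀} : gaussSup v p ≤ γ ↔ ∀ i, v (p.coeff i) ≤ γ := by
  refine Finset.sup_le_iff.trans ⟨fun h i ↦ ?_, fun h i _ ↦ h i⟩
  by_cases hi : i ∈ p.support
  · exact h i hi
  · simp [notMem_support_iff.mp hi]

theorem le_gaussSup (p : R[X]) (i : ℕ) : v (p.coeff i) ≤ gaussSup v p :=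
  gaussSup_le_iff.mp le_rfl i

theorem exists_coeff_eq_gaussSup (p : R[X]) : ∃ i, v (p.coeff i) = gaussSup v p := by
  rcases p.support.eq_empty_or_nonempty with h | h
  · exact ⟨0, by simp [gaussSup, support_eq_empty.mp h, bot_eq_zero]⟩
  · obtain ⟨i, -, hi⟩ := Finset.exists_mem_eq_sup _ h fun i ↦ v (p.coeff i)
    exact ⟨i, hi.symm⟩

theorem gaussSup_add_le (p q : R[X]) : gaussSup v (p + q) ≤ max (gaussSup v p) (gaussSup v q) :=
  gaussSup_le_iff.mpr fun i ↦ by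
    rw [coeff_add]
    exact (v.map_add _ _).trans (max_le_max (le_gaussSup p i) (le_gaussSup q i))

theorem gaussSup_mul_le (p q : R[X]) : gaussSup v (p * q) ≤ gaussSup v p * gaussSup v q :=
  gaussSup_le_iff.mpr fun k ↦ by
    rw [coeff_mul]
    refine v.map_sum_le fun x _ ↦ ?_
    rw [v.map_mul]
    exact mul_le_mul' (le_gaussSup p _) (le_gaussSup q _)

/-- Gauss's lemma: at the first indices `i₀`, `j₀` where `p` and `q` reach their Gauss value, the
coefficient of `X ^ (i₀ + j₀)` in `p * q` is dominated by the single term `p_{i₀} q_{j₀}`. -/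
theorem le_gaussSup_mul (p q : R[X]) : gaussSup v p * gaussSup v q ≤ gaussSup v (p * q) := by
  classical
  by_cases hp : gaussSup v p = 0
  · simp [hp]
  by_cases hq : gaussSup v q = 0
  · simp [hq]
  have hp' := exists_coeff_eq_gaussSup (v := v) p
  have hq' := exists_coeff_eq_gaussSup (v := v) q
  set i₀ := Nat.find hp'
  set j₀ := Nat.find hq'
  have hlt : ∀ x ∈ (antidiagonal (i₀ + j₀)).erase (i₀, j₀),
      v (p.coeff x.1 * q.coeff x.2) < gaussSup v p * gaussSup v q := by
    intro x hx
    obtain ⟨hne, hx⟩ := Finset.mem_erase.mp hx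
    rw [HasAntidiagonal.mem_antidiagonal] at hx
    rw [v.map_mul]
    rcases lt_or_ge x.1 i₀ with h | h
    · exact mul_lt_mul_of_lt_of_le_of_nonneg_of_pos
        ((le_gaussSup p _).lt_of_ne (Nat.find_min hp' h)) (le_gaussSup q _) zero_le
        (pos_iff_ne_zero.mpr hq)
    · have h2 : x.2 < j₀ := by
        by_contra h2
        exact hne (Prod.ext (by omega) (by omega))
      exact mul_lt_mul_of_le_of_lt_of_nonneg_of_pos (le_gaussSup p _)
        ((le_gaussSup q _).lt_of_ne (Nat.find_min hq' h2)) zero_le (pos_iff_ne_zero.mpr hp)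
  have hmem : (i₀, j₀) ∈ antidiagonal (i₀ + j₀) := HasAntidiagonal.mem_antidiagonal.mpr rfl
  have hlead : v (p.coeff i₀ * q.coeff j₀) = gaussSup v p * gaussSup v q := by
    rw [v.map_mul, Nat.find_spec hp', Nat.find_spec hq']
  calc gaussSup v p * gaussSup v q = v ((p * q).coeff (i₀ + j₀)) := by
        rw [coeff_mul, ← add_sum_erase _ _ hmem, v.map_add_eq_of_lt_left, hlead]
        rw [hlead]
        exact v.map_sum_lt (mul_ne_zero hp hq) hlt
    _ ≤ gaussSup v (p * q) := le_gaussSup _ _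

variable (v) in
noncomputable def gaussValuation : Valuation R[X] Γ₀ where
  toFun := gaussSup v
  map_zero' := by simp [gaussSup, bot_eq_zero]
  map_one' := le_antisymm (gaussSup_le_iff.mpr fun i ↦ by
      rw [coeff_one]; split_ifs <;> simp) (by simpa using le_gaussSup (v := v) 1 0)
  map_mul' p q := le_antisymm (gaussSup_mul_le p q) (le_gaussSup_mul p q)
  map_add_le_max' := gaussSup_add_le

theorem gaussValuation_le_iff {p : R[X]} {γ : Γ₀} :
    gaussValuation v p ≤ γ ↔ ∀ i, v (p.coeff i) ≤ γ :=
  gaussSup_le_iff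

theorem gaussValuation_C (r : R) : gaussValuation v (C r) = v r :=
  le_antisymm (gaussValuation_le_iff.mpr fun i ↦ by rw [coeff_C]; split_ifs <;> simp [*])
    (by simpa using le_gaussSup (v := v) (C r) 0 :)

theorem gaussValuation_ne_zero (hv : ∀ r, v r = 0 → r = 0) {p : R[X]} (hp : p ≠ 0) :
    gaussValuation v p ≠ 0 := by
  obtain ⟨i, hi⟩ : ∃ i, p.coeff i ≠ 0 := by
    by_contra! h
    exact hp (ext h)
  exact fun h0 ↦ hi (hv _ (le_zero_iff.mp (h0 ▸ le_gaussSup p i)))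

end GaussValuation

end Polynomial

theorem Subring.mem_or_inv_mem_of_valuationRing {R K : Type*} [CommRing R] [IsDomain R] [Field K]
    [Algebra R K] [IsFractionRing R K] {V : Subring K} [ValuationRing V]
    (hRV : Set.range (algebraMap R K) ⊆ V) (x : K) : x ∈ V ∨ x⁻¹ ∈ V := by
  have div_mem {p q c : K} (hc : c ∈ V) (h : q * c = p) : p / q ∈ V := by
    rcases eq_or_ne q 0 with rfl | hq
    · simp
    · rwa [← h, mul_div_cancel_left₀ _ hq]
  obtain ⟨p, q, -, rfl⟩ := IsFractionRing.div_surjective R x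
  obtain ⟨c, hc | hc⟩ := ValuationRing.cond (⟨_, hRV ⟨p, rfl⟩⟩ : V) ⟨_, hRV ⟨q, rfl⟩⟩
  · exact .inr (inv_div (algebraMap R K p) _ ▸ div_mem c.2 congr(Subtype.val $hc))
  · exact .inl (div_mem c.2 congr(Subtype.val $hc))

theorem Valuation.le_iff_exists_mem_valuationSubring {K Γ₀ : Type*} [Field K]
    [LinearOrderedCommGroupWithZero Γ₀] (v : Valuation K Γ₀) {x y : K} :
    v x ≤ v y ↔ ∃ z ∈ v.valuationSubring, x = y * z := by
  rw [v.isEquiv_valuation_valuationSubring.le_iff_le, ValuationSubring.valuation_le_iff]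
  constructor
  · rintro ⟨z, rfl⟩
    exact ⟨z, z.2, mul_comm _ _⟩
  · rintro ⟨z, hz, rfl⟩
    exact ⟨⟨z, hz⟩, mul_comm _ _⟩

namespace IsValuationElement

variable {D : Type*} [CommRing D] [IsDomain D] {a : D}

theorem map_C (h : IsValuationElement D a) : IsValuationElement D[X] (C a) := by
  obtain ⟨ha, hu, V, hV, _, hdiv⟩ := h
  let A := ValuationSubring.ofSubring V (Subring.mem_or_inv_mem_of_valuationRing hV)
  let vD := A.valuation.comap (algebraMap D (FractionRing D))
  have hvD_le (d : D) : vD d ≤ vD a ↔ a ∣ d := by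
    rw [← hdiv, Valuation.comap_apply, Valuation.comap_apply,
      Valuation.le_iff_exists_mem_valuationSubring, ValuationSubring.valuationSubring_valuation]
    rfl
  let w := gaussValuation vD
  have hvD (d : D) (hd : vD d = 0) : d = 0 :=
    IsFractionRing.injective D (FractionRing D) (by simpa [vD] using hd)
  have hw : nonZeroDivisors D[X] ≤ w.supp.primeCompl := fun p hp ↦
    gaussValuation_ne_zero hvD (nonZeroDivisors.ne_zero hp)
  let vL := w.extendToLocalization hw (FractionRing D[X])
  have hvL (p : D[X]) : vL (algebraMap D[X] _ p) = w p :=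
    w.extendToLocalization_apply_map_apply hw _ p
  refine ⟨C_ne_zero.mpr ha, fun h ↦ hu (isUnit_C.mp h), vL.valuationSubring.toSubring,
    ?_, inferInstanceAs (ValuationRing vL.valuationSubring), fun p ↦ ?_⟩
  · rintro _ ⟨p, rfl⟩
    rw [SetLike.mem_coe, ValuationSubring.mem_toSubring, Valuation.mem_valuationSubring_iff, hvL,
      gaussValuation_le_iff]
    exact fun i ↦ A.valuation_le_one ⟨_, hV ⟨p.coeff i, rfl⟩⟩
  · refine vL.le_iff_exists_mem_valuationSubring.symm.trans ?_
    rw [hvL, hvL, gaussValuation_C, gaussValuation_le_iff, C_dvd_iff_dvd_coeff]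
    exact forall_congr' fun i ↦ hvD_le _

theorem of_map_C (h : IsValuationElement D[X] (C a)) : IsValuationElement D a := by
  obtain ⟨ha, hu, W, hW, _, hdiv⟩ := h
  let B := ValuationSubring.ofSubring W (Subring.mem_or_inv_mem_of_valuationRing hW)
  let j : FractionRing D →+* FractionRing D[X] := IsFractionRing.map (C_injective (R := D))
  have hj (d : D) : j (algebraMap D _ d) = algebraMap D[X] _ (Polynomial.C d) :=
    IsLocalization.map_eq _ _
  have hmem (d : D) : algebraMap D _ d ∈ B.comap j := by
    rw [ValuationSubring.mem_comap, hj]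
    exact hW ⟨_, rfl⟩
  refine ⟨C_ne_zero.mp ha, fun h ↦ hu (isUnit_C.mpr h), (B.comap j).toSubring,
    fun _ ⟨d, hd⟩ ↦ hd ▸ hmem d, inferInstanceAs (ValuationRing (B.comap j)), fun d ↦ ⟨?_, ?_⟩⟩
  · rintro ⟨z, hz, e⟩
    have : Polynomial.C a ∣ Polynomial.C d := (hdiv _).mp ⟨j z, hz, by rw [← hj, ← hj, e, map_mul]⟩
    simpa using (C_dvd_iff_dvd_coeff a _).mp this 0
  · rintro ⟨e, rfl⟩
    exact ⟨_, hmem e, map_mul _ _ _⟩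

end IsValuationElement

theorem stmt19_general (D : Type*) [CommRing D] [IsDomain D] (a : D) :
    IsValuationElement D a ↔ IsValuationElement (Polynomial D) (Polynomial.C a) :=
  ⟨.map_C, .of_map_C⟩

theorem stmt19 (D : Type*) [CommRing D] [IsDomain D] (a : D)
    (ha : a ≠ 0) (hu : ¬ IsUnit a) :
    IsValuationElement D a ↔ IsValuationElement (Polynomial D) (Polynomial.C a) :=
  stmt19_general D a
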